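/- Let g, r, d be positive integers with d ≤ 3r(g-1)/(2r+2). If integers k, s satisfy 1 ≤ s and (r-1)/(r+1) ≤ k/s < r/(r+1) and (k/s - (r-1)/(r+1))² · (2g-2) ≥ (8r(g-1) - 4d(r+1))/(r(r+1)²), then we reach a contradiction; i.e., no such k, s exist. -/

import Mathlib

/-!
Put `x = k/s - (r-1)/(r+1)`. The slope constraints say `0 ≤ x < 1/(r+1)`, so the left side of the
Bogomolov-type inequality is `x² (2g-2) < 2(g-1)/(r+1)²`. On the other hand the degree bound
`2d(r+1) ≤ 3r(g-1)` makes its right side at least `2r(g-1)/(r(r+1)²) = 2(g-1)/(r+1)²`.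
-/

section

variable {K : Type*} [Field K] [LinearOrder K] [IsStrictOrderedRing K]

lemma sq_mul_two_mul_sub_two_lt {g r x : K} (hg : 1 < g) (hx₀ : 0 ≤ x) (hx : x < 1 / (r + 1)) :
    x ^ 2 * (2 * g - 2) < 2 * (g - 1) / (r + 1) ^ 2 := by
  have hr : 0 < r + 1 := one_div_pos.mp (hx₀.trans_lt hx)
  have hsq : x ^ 2 < (1 / (r + 1)) ^ 2 := pow_lt_pow_left₀ hx hx₀ two_ne_zero
  calc x ^ 2 * (2 * g - 2) < (1 / (r + 1)) ^ 2 * (2 * g - 2) :=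
        mul_lt_mul_of_pos_right hsq (by linarith)
    _ = 2 * (g - 1) / (r + 1) ^ 2 := by field_simp

lemma two_mul_sub_one_div_sq_le {g r d : K} (hr : 0 < r)
    (hd : d * (2 * r + 2) ≤ 3 * r * (g - 1)) :
    2 * (g - 1) / (r + 1) ^ 2 ≤ (8 * r * (g - 1) - 4 * d * (r + 1)) / (r * (r + 1) ^ 2) := by
  calc 2 * (g - 1) / (r + 1) ^ 2 = 2 * r * (g - 1) / (r * (r + 1) ^ 2) := by
        field_simp
    _ ≤ (8 * r * (g - 1) - 4 * d * (r + 1)) / (r * (r + 1) ^ 2) :=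
        div_le_div_of_nonneg_right (by linarith) (by positivity)

lemma sub_sub_one_div_add_one_lt {r y : K} (hy : y < r / (r + 1)) :
    y - (r - 1) / (r + 1) < 1 / (r + 1) := by
  have : r / (r + 1) - (r - 1) / (r + 1) = 1 / (r + 1) := by rw [div_sub_div_same, sub_sub_cancel]
  linarith

end

theorem stmt_0_general (g r d k s : ℤ) (hg : 2 ≤ g) (hr : 1 ≤ r)
    (hdle : (d : ℚ) ≤ 3 * r * (g - 1) / (2 * r + 2))
    (h1 : ((r : ℚ) - 1) / (r + 1) ≤ (k : ℚ) / s)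
    (h2 : (k : ℚ) / s < (r : ℚ) / (r + 1))
    (h3 : ((k : ℚ) / s - ((r : ℚ) - 1) / (r + 1)) ^ 2 * (2 * g - 2) ≥
      (8 * r * (g - 1) - 4 * d * (r + 1)) / (r * (r + 1) ^ 2)) :
    False := by
  have hg' : (1 : ℚ) < g := by exact_mod_cast hg
  have hr' : (0 : ℚ) < r := by exact_mod_cast hr
  have hd : (d : ℚ) * (2 * r + 2) ≤ 3 * r * (g - 1) := (le_div_iff₀ (by linarith)).mp hdle
  have upper :=
    sq_mul_two_mul_sub_two_lt hg' (sub_nonneg.mpr h1) (sub_sub_one_div_add_one_lt h2)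
  have lower := two_mul_sub_one_div_sq_le hr' hd
  exact (lower.trans h3).not_gt upper

/-- Step 1 numerical core: no destabilizing data (k, s) can satisfy both the
slope constraints and the Bogomolov-type inequality when d ≤ 3r(g-1)/(2r+2). -/
theorem stmt_0 (g r d k s : ℤ) (hg : 2 ≤ g) (hr : 1 ≤ r) (hd : 1 ≤ d)
    (hdle : (d : ℚ) ≤ 3 * r * (g - 1) / (2 * r + 2))
    (hs : 1 ≤ s)
    (h1 : ((r : ℚ) - 1) / (r + 1) ≤ (k : ℚ) / s)
    (h2 : (k : ℚ) / s < (r : ℚ) / (r + 1))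
    (h3 : ((k : ℚ) / s - ((r : ℚ) - 1) / (r + 1)) ^ 2 * (2 * g - 2) ≥
      (8 * r * (g - 1) - 4 * d * (r + 1)) / (r * (r + 1) ^ 2)) :
    False :=
  stmt_0_general g r d k s hg hr hdle h1 h2 h3
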